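/- arXiv:1009.0046 — 3 statements merged into one kernel-verified Lean document; each statement's English description precedes it below -/
import Mathlib

section
/- Let S be a commutative ring and f_1,...,f_n a regular sequence generating an ideal I. Then for every k ≥ 0, I^k/I^{k+1} is a free S/I-module with basis given by the images of the monomials f_1^{m_1} ··· f_n^{m_n} with m_1 + ··· + m_n = k. -/
/-!
Spanning is formal; the content is that a regular sequence `f` is quasi-regular: a form `F` of
degree `k` with `F(f) ∈ I^(k+1)` has all its coefficients in `I`.
Since `I^(k+1)` consists of the values of degree-`k` forms with coefficients in `I`, it suffices
to treat forms with `F(f) = 0`. Induct on the length of the sequence, and for a fixed length on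
`k`. Write `f = (f', g)` with `J = (f')` and split `F = A(X') + X_last G`. Because `f'` is
quasi-regular and `g` is a nonzerodivisor modulo `J`, it is a nonzerodivisor modulo every `J^k`,
so `g G(f) = -A(f') ∈ J^k` gives `G(f) ∈ J^k`; induction on `k` puts the coefficients of `G`
in `I`. Writing `G(f) = H(f')`, the form `A + g H` vanishes at `f'`, so its coefficients lie in
`J`, and those of `A` lie in `J + (g) = I`.
-/

open MvPolynomial

section QuasiRegular

variable {S σ : Type*} [CommRing S]

/-- Injectivity of the canonical surjection `(S/I)[X] → gr_I S`, `I = (f)`, stated on forms. -/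
def IsQuasiRegular (f : σ → S) : Prop :=
  ∀ (k : ℕ) (F : MvPolynomial σ S), F.IsHomogeneous k →
    eval f F ∈ Ideal.span (Set.range f) ^ (k + 1) → F ∈ Ideal.map C (Ideal.span (Set.range f))

theorem Ideal.mem_mul_span_pow_iff_exists_isHomogeneous (J : Ideal S) (f : σ → S) (k : ℕ)
    (x : S) :
    x ∈ J * Ideal.span (Set.range f) ^ k ↔
      ∃ P : MvPolynomial σ S, P.IsHomogeneous k ∧ P ∈ Ideal.map C J ∧ eval f P = x := by
  constructor
  · intro hx
    refine Submodule.mul_induction_on hx (fun a ha b hb => ?_) ?_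
    · obtain ⟨Q, hQ, rfl⟩ := (Ideal.mem_span_pow_iff_exists_isHomogeneous f b).mp hb
      exact ⟨C a * Q, hQ.C_mul a, Ideal.mul_mem_right _ _ (Ideal.mem_map_of_mem C ha),
        by rw [map_mul, eval_C]⟩
    · rintro _ _ ⟨P, hP, hPJ, rfl⟩ ⟨Q, hQ, hQJ, rfl⟩
      exact ⟨P + Q, hP.add hQ, add_mem hPJ hQJ, map_add _ _ _⟩
  · rintro ⟨P, hP, hPJ, rfl⟩
    rw [P.as_sum, map_sum]
    refine Ideal.sum_mem _ fun d hd => ?_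
    have hdeg : d.degree = k := by
      by_contra h
      exact mem_support_iff.mp hd (hP.coeff_eq_zero h)
    rw [← mul_one (coeff d P), ← C_mul_monomial, map_mul, eval_C]
    exact Ideal.mul_mem_mul (MvPolynomial.mem_map_C_iff.mp hPJ d)
      ((Ideal.mem_span_pow_iff_exists_isHomogeneous f _).mpr
        ⟨_, isHomogeneous_monomial 1 hdeg, rfl⟩)

theorem MvPolynomial.mem_map_C_of_eval_mem_pow {f : σ → S} {k : ℕ}
    (h : ∀ F : MvPolynomial σ S, F.IsHomogeneous k → eval f F = 0 →
      F ∈ Ideal.map C (Ideal.span (Set.range f)))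
    {F : MvPolynomial σ S} (hF : F.IsHomogeneous k)
    (hFe : eval f F ∈ Ideal.span (Set.range f) ^ (k + 1)) :
    F ∈ Ideal.map C (Ideal.span (Set.range f)) := by
  rw [pow_succ', Ideal.mem_mul_span_pow_iff_exists_isHomogeneous] at hFe
  obtain ⟨E, hE, hEI, hEF⟩ := hFe
  have hFE : F - E ∈ Ideal.map C (Ideal.span (Set.range f)) :=
    h _ (hF.sub hE) (by rw [map_sub, hEF, sub_self])
  simpa using add_mem hFE hEI

theorem MvPolynomial.mem_map_C_of_isHomogeneous_zero {f : σ → S} {F : MvPolynomial σ S}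
    (hF : F.IsHomogeneous 0) (hFe : eval f F ∈ Ideal.span (Set.range f)) :
    F ∈ Ideal.map C (Ideal.span (Set.range f)) := by
  obtain ⟨c, rfl⟩ : ∃ c, F = C c :=
    ⟨_, totalDegree_eq_zero_iff_eq_C.mp (Nat.le_zero.mp hF.totalDegree_le)⟩
  rw [eval_C] at hFe
  exact Ideal.mem_map_of_mem C hFe

theorem MvPolynomial.rename_mem_map_C {τ : Type*} (e : σ → τ) {I : Ideal S}
    {p : MvPolynomial σ S} (hp : p ∈ Ideal.map C I) : rename e p ∈ Ideal.map C I := by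
  have := Ideal.mem_map_of_mem (rename e).toRingHom hp
  rwa [Ideal.map_map, show (rename e).toRingHom.comp C = C from RingHom.ext (rename_C e)] at this

theorem MvPolynomial.IsHomogeneous.exists_eq_rename_castSucc_add_X_last_mul {n k : ℕ}
    {F : MvPolynomial (Fin (n + 1)) S} (hF : F.IsHomogeneous (k + 1)) :
    ∃ (A : MvPolynomial (Fin n) S) (G : MvPolynomial (Fin (n + 1)) S),
      A.IsHomogeneous (k + 1) ∧ G.IsHomogeneous k ∧
        F = rename Fin.castSucc A + X (Fin.last n) * G := by
  set s := Finsupp.single (Fin.last n) 1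
  have hG : (F.divMonomial s).IsHomogeneous k := by
    intro d hd
    rw [coeff_divMonomial] at hd
    have hdeg := hF hd
    rw [map_add, Finsupp.weight_single, Pi.one_apply, one_smul] at hdeg
    omega
  have hR : (F.modMonomial s).IsHomogeneous (k + 1) := by
    intro d hd
    by_cases h : s ≤ d
    · exact absurd (coeff_modMonomial_of_le F h) hd
    · rw [coeff_modMonomial_of_not_le F h] at hd
      exact hF hd
  have hvars : ((F.modMonomial s).vars : Set (Fin (n + 1))) ⊆ Set.range Fin.castSucc := by
    intro i hi
    obtain ⟨d, hd, hid⟩ := (mem_vars_iff_mem_support i).mp hi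
    induction i using Fin.lastCases with
    | last =>
      refine absurd (coeff_modMonomial_of_le F ?_) (mem_support_iff.mp hd)
      simpa [s, Finsupp.single_le_iff, Nat.one_le_iff_ne_zero] using hid
    | cast j => exact ⟨j, rfl⟩
  obtain ⟨A, hA⟩ := exists_rename_eq_of_vars_subset_range _ _ (Fin.castSucc_injective n) hvars
  refine ⟨A, _, (rename_isHomogeneous_iff (Fin.castSucc_injective n)).mp (hA ▸ hR), hG, ?_⟩
  rw [hA, modMonomial_add_divMonomial_single]

theorem isQuasiRegular_of_isEmpty [IsEmpty σ] (f : σ → S) : IsQuasiRegular f := by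
  intro k F _ hFe
  rw [eq_C_of_isEmpty F] at hFe ⊢
  simp_all [Set.range_eq_empty]

theorem IsQuasiRegular.mem_pow_of_mul_mem_pow {f : σ → S} (hf : IsQuasiRegular f) {g : S}
    (hg : ∀ z, g * z ∈ Ideal.span (Set.range f) → z ∈ Ideal.span (Set.range f)) :
    ∀ (k : ℕ) {z : S}, g * z ∈ Ideal.span (Set.range f) ^ k → z ∈ Ideal.span (Set.range f) ^ k
  | 0, _, _ => by simp
  | k + 1, z, hz => by
    have hzk := hf.mem_pow_of_mul_mem_pow hg k (Ideal.pow_le_pow_right k.le_succ hz)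
    obtain ⟨P, hP, rfl⟩ := (Ideal.mem_span_pow_iff_exists_isHomogeneous f z).mp hzk
    have hgP := hf k _ (hP.C_mul g) (by rwa [map_mul, eval_C])
    have hPI : P ∈ Ideal.map C (Ideal.span (Set.range f)) :=
      mem_map_C_iff.mpr fun d => hg _ (by simpa using mem_map_C_iff.mp hgP d)
    rw [pow_succ']
    exact (Ideal.mem_mul_span_pow_iff_exists_isHomogeneous _ f k _).mpr ⟨P, hP, hPI, rfl⟩

theorem IsQuasiRegular.snoc {n : ℕ} {f : Fin n → S} (hf : IsQuasiRegular f) {g : S}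
    (hg : ∀ z, g * z ∈ Ideal.span (Set.range f) → z ∈ Ideal.span (Set.range f)) :
    IsQuasiRegular (Fin.snoc f g : Fin (n + 1) → S) := by
  set J := Ideal.span (Set.range f)
  set I := Ideal.span (Set.range (Fin.snoc f g : Fin (n + 1) → S))
  have hIJ : I = Ideal.span {g} ⊔ J := by
    simp only [I, J, Fin.range_snoc, Ideal.span_insert]
  have hJI : J ≤ I := hIJ ▸ le_sup_right
  have hgI : C g ∈ Ideal.map (C : S →+* MvPolynomial (Fin n) S) I :=
    Ideal.mem_map_of_mem _ (hIJ ▸ Ideal.mem_sup_left (Ideal.mem_span_singleton_self g))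
  intro k
  induction k with
  | zero => exact fun F hF hFe => mem_map_C_of_isHomogeneous_zero hF (by simpa using hFe)
  | succ k ih =>
    intro F hF hFe
    refine mem_map_C_of_eval_mem_pow (fun F hF hF0 => ?_) hF hFe
    obtain ⟨A, G, hA, hG, rfl⟩ := hF.exists_eq_rename_castSucc_add_X_last_mul
    have hAG : eval f A + g * eval (Fin.snoc f g) G = 0 := by
      simpa [eval_rename, Fin.snoc_comp_castSucc] using hF0
    have hGJ : eval (Fin.snoc f g) G ∈ J ^ (k + 1) := by
      refine hf.mem_pow_of_mul_mem_pow hg (k + 1) ?_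
      rw [eq_neg_of_add_eq_zero_right hAG]
      exact neg_mem ((Ideal.mem_span_pow_iff_exists_isHomogeneous f _).mpr ⟨A, hA, rfl⟩)
    have hGI : G ∈ Ideal.map C I := ih G hG (Ideal.pow_right_mono hJI _ hGJ)
    obtain ⟨H, hH, hHG⟩ := (Ideal.mem_span_pow_iff_exists_isHomogeneous f _).mp hGJ
    have hAH : A + C g * H ∈ Ideal.map C J :=
      hf _ _ (hA.add (hH.C_mul g)) (by simp [hHG, hAG])
    have hAI : A ∈ Ideal.map C I := by
      simpa using sub_mem (Ideal.map_mono hJI hAH) (Ideal.mul_mem_right H _ hgI)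
    exact add_mem (rename_mem_map_C _ hAI) (Ideal.mul_mem_left _ _ hGI)

theorem Ideal.ofList_ofFn {n : ℕ} (f : Fin n → S) :
    Ideal.ofList (List.ofFn f) = Ideal.span (Set.range f) :=
  congrArg Ideal.span (Set.ext fun x => List.mem_ofFn' f x)

theorem List.ofFn_snoc {α : Type*} {n : ℕ} (f : Fin n → α) (a : α) :
    List.ofFn (Fin.snoc f a : Fin (n + 1) → α) = List.ofFn f ++ [a] := by
  rw [List.ofFn_succ', List.concat_eq_append]
  simp

theorem Ideal.mem_of_mul_mem_of_isSMulRegular {J : Ideal S} {g : S}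
    (hg : IsSMulRegular (S ⧸ (J • ⊤ : Submodule S S)) g) {z : S} (hz : g * z ∈ J) : z ∈ J := by
  rw [smul_eq_mul, Ideal.mul_top] at hg
  refine (Submodule.Quotient.mk_eq_zero J).mp (hg ?_)
  show g • Submodule.Quotient.mk z = g • 0
  rw [smul_zero, ← Submodule.Quotient.mk_smul, Submodule.Quotient.mk_eq_zero]
  exact hz

open RingTheory.Sequence in
theorem isQuasiRegular_of_isWeaklyRegular {n : ℕ} (f : Fin n → S)
    (hf : IsWeaklyRegular S (List.ofFn f)) : IsQuasiRegular f := by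
  induction f using Fin.snocInduction with
  | elim0 => exact isQuasiRegular_of_isEmpty _
  | snoc f g ih =>
    rw [List.ofFn_snoc, isWeaklyRegular_append_iff, isWeaklyRegular_singleton_iff,
      Ideal.ofList_ofFn] at hf
    exact (ih hf.1).snoc fun _ => Ideal.mem_of_mul_mem_of_isSMulRegular hf.2

theorem MvPolynomial.IsHomogeneous.eval_eq_sum_antidiagonalTuple {n k : ℕ} {F : MvPolynomial (Fin n) S}
    (hF : F.IsHomogeneous k) (f : Fin n → S) :
    eval f F = ∑ m ∈ Finset.Nat.antidiagonalTuple n k,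
      coeff (Finsupp.equivFunOnFinite.symm m) F * ∏ i, f i ^ m i := by
  have hsupp : F.support ⊆
      (Finset.Nat.antidiagonalTuple n k).map Finsupp.equivFunOnFinite.symm.toEmbedding := by
    intro d hd
    have hdeg : d.degree = k := by
      by_contra h
      exact mem_support_iff.mp hd (hF.coeff_eq_zero h)
    simpa [Finset.mem_map_equiv, Finset.Nat.mem_antidiagonalTuple, ← Finsupp.degree_eq_sum]
      using hdeg
  rw [eval_eq', Finset.sum_subset hsupp fun d _ hd => by simp [notMem_support_iff.mp hd],
    Finset.sum_map]
  rfl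

theorem MvPolynomial.isHomogeneous_sum_monomial_antidiagonalTuple {n k : ℕ} (c : (Fin n → ℕ) → S) :
    (∑ m ∈ Finset.Nat.antidiagonalTuple n k,
      monomial (Finsupp.equivFunOnFinite.symm m) (c m)).IsHomogeneous k :=
  IsHomogeneous.sum _ _ _ fun m hm => isHomogeneous_monomial _ <| by
    simpa [Finsupp.degree_eq_sum] using Finset.Nat.mem_antidiagonalTuple.mp hm

theorem MvPolynomial.coeff_sum_monomial_antidiagonalTuple {n k : ℕ} (c : (Fin n → ℕ) → S)
    {m : Fin n → ℕ} (hm : m ∈ Finset.Nat.antidiagonalTuple n k) :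
    coeff (Finsupp.equivFunOnFinite.symm m)
      (∑ m' ∈ Finset.Nat.antidiagonalTuple n k,
        monomial (Finsupp.equivFunOnFinite.symm m') (c m')) = c m := by
  simp [coeff_sum, coeff_monomial, hm]

end QuasiRegular

/-- Let `S` be a commutative ring and `f₁, …, fₙ` a regular sequence generating the ideal
`I`.  Then for every `k ≥ 0`, `I^k / I^(k+1)` is a free `S/I`-module with basis the images
of the monomials `f₁^{m₁} ⋯ fₙ^{mₙ}` with `m₁ + ⋯ + mₙ = k`.  (Spelled out elementwise:
the monomials span `I^k` modulo `I^(k+1)`, and any `S`-linear combination of them lying in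
`I^(k+1)` has all coefficients in `I`.) -/
theorem regular_sequence_graded_free {S : Type*} [CommRing S] (n : ℕ) (f : Fin n → S)
    (hreg : RingTheory.Sequence.IsRegular S (List.ofFn f)) (k : ℕ) :
    -- the monomials of degree `k` span `I^k` over `S`, modulo `I^(k+1)`
    (∀ x ∈ (Ideal.span (Set.range f)) ^ k, ∃ c : (Fin n → ℕ) → S,
        x - ∑ m ∈ Finset.Nat.antidiagonalTuple n k, c m * ∏ i, f i ^ m i ∈
          (Ideal.span (Set.range f)) ^ (k + 1)) ∧
    -- the monomials of degree `k` are linearly independent over `S/I`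
    (∀ c : (Fin n → ℕ) → S,
        (∑ m ∈ Finset.Nat.antidiagonalTuple n k, c m * ∏ i, f i ^ m i) ∈
            (Ideal.span (Set.range f)) ^ (k + 1) →
        ∀ m ∈ Finset.Nat.antidiagonalTuple n k, c m ∈ Ideal.span (Set.range f)) := by
  refine ⟨fun x hx => ?_, fun c hc m hm => ?_⟩
  · obtain ⟨F, hF, rfl⟩ := (Ideal.mem_span_pow_iff_exists_isHomogeneous f x).mp hx
    exact ⟨_, by rw [hF.eval_eq_sum_antidiagonalTuple f, sub_self]; exact zero_mem _⟩
  · set F := ∑ m ∈ Finset.Nat.antidiagonalTuple n k,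
      monomial (Finsupp.equivFunOnFinite.symm m) (c m)
    have hFe : eval f F = ∑ m ∈ Finset.Nat.antidiagonalTuple n k, c m * ∏ i, f i ^ m i := by
      rw [(isHomogeneous_sum_monomial_antidiagonalTuple c).eval_eq_sum_antidiagonalTuple f]
      exact Finset.sum_congr rfl fun m hm => by rw [coeff_sum_monomial_antidiagonalTuple c hm]
    have hFI : F ∈ Ideal.map C (Ideal.span (Set.range f)) :=
      isQuasiRegular_of_isWeaklyRegular f hreg.toIsWeaklyRegular k F
        (isHomogeneous_sum_monomial_antidiagonalTuple c) (hFe ▸ hc)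
    rw [← coeff_sum_monomial_antidiagonalTuple c hm]
    exact MvPolynomial.mem_map_C_iff.mp hFI _
end

section
/- Let Q_j : gl_n(ℂ) → ℂ be defined by det(t·Id − X) = Σ_{j=0}^n (−1)^j t^{n−j} Q_j(X). Then each Q_j is a GL_n(ℂ)-conjugation-invariant homogeneous polynomial of degree j on gl_n, and Q_1,...,Q_n generate the algebra ℂ[gl_n]^{GL_n} of conjugation-invariant polynomial functions. -/
open MvPolynomial

/-- The generic `n × n` matrix, whose entries are the variables `X (i,j)`. -/
noncomputable def genericMatrix (n : ℕ) :
    Matrix (Fin n) (Fin n) (MvPolynomial (Fin n × Fin n) ℂ) :=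
  Matrix.of fun i j => MvPolynomial.X (i, j)

/-- `Q_j`, as a polynomial function on `gl_n`: it is `(-1)^j` times the coefficient of
`t^(n-j)` in `det(t·Id − X)`, i.e. in the characteristic polynomial of the generic matrix. -/
noncomputable def Qpoly (n j : ℕ) : MvPolynomial (Fin n × Fin n) ℂ :=
  (-1 : MvPolynomial (Fin n × Fin n) ℂ) ^ j * ((genericMatrix n).charpoly.coeff (n - j))

/-!
Restricting an invariant `f` to the diagonal matrices gives a symmetric polynomial, hence a
polynomial `Φ` in the elementary symmetric polynomials `e₁, …, eₙ`. Since the `Q_j` evaluate to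
the elementary symmetric functions of the eigenvalues, `F = Φ(Q₁, …, Qₙ)` agrees with `f` on every
matrix with distinct eigenvalues, such a matrix being conjugate to the diagonal matrix of its
eigenvalues. Writing `∏_{i ≠ j} (xᵢ - xⱼ) = Ψ(e₁, …, eₙ)`, these are exactly the matrices at which
`Δ = Ψ(Q₁, …, Qₙ)` does not vanish; as `Δ ≠ 0` and `ℂ` is infinite, `Δ · (f - F) = 0` forces
`f = F`.
-/

namespace Matrix

variable {n K : Type*} [Fintype n] [DecidableEq n] [Field K]

theorem exists_charpoly_eq_prod [IsAlgClosed K] (A : Matrix n n K) :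
    ∃ μ : n → K, A.charpoly = ∏ i, (Polynomial.X - Polynomial.C (μ i)) := by
  have hsplit : A.charpoly.Splits := IsAlgClosed.splits _
  set l := A.charpoly.roots.toList
  have hl : Fintype.card n = l.length := by
    rw [Multiset.length_toList, ← hsplit.natDegree_eq_card_roots, charpoly_natDegree_eq_dim]
  refine ⟨fun i => l[((Fintype.equivFin n).trans (finCongr hl) i : ℕ)], ?_⟩
  beta_reduce
  rw [Equiv.prod_comp ((Fintype.equivFin n).trans (finCongr hl))
      (fun k => Polynomial.X - Polynomial.C l[k.1]),
    Fin.prod_univ_fun_getElem l (fun x => Polynomial.X - Polynomial.C x),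
    ← Multiset.prod_coe, ← Multiset.map_coe, Multiset.coe_toList]
  exact hsplit.eq_prod_roots_of_monic A.charpoly_monic

theorem exists_conj_diagonal_of_charpoly_eq_prod {A : Matrix n n K} {μ : n → K}
    (hμ : Function.Injective μ) (hA : A.charpoly = ∏ i, (Polynomial.X - Polynomial.C (μ i))) :
    ∃ g : GL n K, A = (g : Matrix n n K) * diagonal μ * (↑g⁻¹ : Matrix n n K) := by
  have hev : ∀ i, Module.End.HasEigenvalue (toLin' A) (μ i) := fun i => by
    rw [Module.End.hasEigenvalue_iff_isRoot_charpoly, charpoly_toLin', hA, Polynomial.IsRoot,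
      Polynomial.eval_prod]
    exact Finset.prod_eq_zero (Finset.mem_univ i) (by simp)
  choose v hv using fun i => (hev i).exists_hasEigenvector
  have hP : IsUnit (of v)ᵀ := by
    rw [← linearIndependent_cols_iff_isUnit]
    exact Module.End.eigenvectors_linearIndependent' _ μ hμ v hv
  have hAP : A * (of v)ᵀ = (of v)ᵀ * diagonal μ := by
    ext i j
    rw [mul_diagonal]
    simpa [mul_apply, mulVec, dotProduct, mul_comm] using congrFun (hv j).apply_eq_smul i
  refine ⟨hP.unit, ?_⟩
  calc A = A * (hP.unit * ↑hP.unit⁻¹ : Matrix n n K) := by rw [Units.mul_inv, Matrix.mul_one]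
    _ = _ := by rw [← Matrix.mul_assoc, hP.unit_spec, hAP]

theorem exists_conj_diagonal_comp_perm (σ : Equiv.Perm n) (y : n → K) :
    ∃ g : GL n K,
      diagonal (y ∘ σ) = (g : Matrix n n K) * diagonal y * (↑g⁻¹ : Matrix n n K) := by
  refine ⟨⟨σ.permMatrix K, σ⁻¹.permMatrix K, by simp [← permMatrix_mul],
    by simp [← permMatrix_mul]⟩, ?_⟩
  change _ = σ.permMatrix K * diagonal y * σ⁻¹.permMatrix K
  rw [PEquiv.toMatrix_toPEquiv_mul, PEquiv.mul_toMatrix_toPEquiv, submatrix_submatrix,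
    Function.comp_id, Function.id_comp, Equiv.Perm.inv_def, Equiv.symm_symm,
    submatrix_diagonal_equiv]

end Matrix

namespace MvPolynomial

variable {σ R : Type*} [CommRing R]

theorem eval_aeval {τ : Type*} (x : σ → R) (g : τ → MvPolynomial σ R)
    (p : MvPolynomial τ R) : eval x (aeval g p) = eval (fun i => eval x (g i)) p := by
  rw [aeval_eq_bind₁]
  exact eval₂Hom_bind₁ _ _ _ _

theorem eq_of_eval_eq_of_eval_ne_zero [IsDomain R] [Infinite R] {p q Δ : MvPolynomial σ R}
    (hΔ : Δ ≠ 0) (h : ∀ x, eval x Δ ≠ 0 → eval x p = eval x q) : p = q := by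
  have hvanish : Δ * (p - q) = 0 := MvPolynomial.funext fun x => by
    by_cases hx : eval x Δ = 0
    · simp [hx]
    · simp [h x hx]
  simpa [hΔ, sub_eq_zero] using hvanish

theorem exists_aeval_esymm_eq {n : ℕ} {p : MvPolynomial (Fin n) R} (hp : p.IsSymmetric) :
    ∃ Φ : MvPolynomial (Fin n) R, aeval (fun i : Fin n => esymm (Fin n) R (i + 1)) Φ = p := by
  obtain ⟨Φ, hΦ⟩ := esymmAlgHom_surjective R (Fintype.card_fin n).le ⟨p, hp⟩
  exact ⟨Φ, by simpa [esymmAlgHom_apply] using congrArg Subtype.val hΦ⟩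

section PairwiseDiffProd

variable [Fintype σ]

variable (σ R) in
noncomputable def pairwiseDiffProd : MvPolynomial σ R :=
  ∏ p ∈ Finset.univ.offDiag, (X p.1 - X p.2)

theorem eval_pairwiseDiffProd_ne_zero_iff [IsDomain R] (x : σ → R) :
    eval x (pairwiseDiffProd σ R) ≠ 0 ↔ Function.Injective x := by
  simp only [pairwiseDiffProd, map_prod, map_sub, eval_X, ne_eq, Finset.prod_eq_zero_iff,
    Finset.mem_offDiag, Finset.mem_univ, true_and, sub_eq_zero, not_exists, not_and, Prod.forall]
  exact ⟨fun h a b hab => by_contra fun hne => h a b hne hab, fun h a b hne hab => hne (h hab)⟩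

theorem pairwiseDiffProd_isSymmetric : (pairwiseDiffProd σ R).IsSymmetric := fun e => by
  rw [pairwiseDiffProd, map_prod]
  exact Finset.prod_nbij' (fun p => (e p.1, e p.2)) (fun p => (e.symm p.1, e.symm p.2))
    (by simp) (by simp) (by simp) (by simp) (by simp)

end PairwiseDiffProd

variable (σ R) in
noncomputable def restrictDiagonal [DecidableEq σ] : MvPolynomial (σ × σ) R →ₐ[R] MvPolynomial σ R :=
  aeval fun q => Matrix.diagonal (X : σ → MvPolynomial σ R) q.1 q.2

theorem eval_restrictDiagonal [DecidableEq σ] (y : σ → R) (f : MvPolynomial (σ × σ) R) :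
    eval y (restrictDiagonal σ R f) = eval (fun q => Matrix.diagonal y q.1 q.2) f := by
  rw [restrictDiagonal, eval_aeval]
  congr 2
  funext q
  by_cases h : q.1 = q.2 <;> simp [h]

end MvPolynomial

section Invariants

variable {n K : Type*} [Fintype n] [DecidableEq n] [Field K]

def IsConjInvariant (f : MvPolynomial (n × n) K) : Prop :=
  ∀ (g : GL n K) (A : Matrix n n K),
    eval (fun q => ((g : Matrix n n K) * A * (↑g⁻¹ : Matrix n n K)) q.1 q.2) f =
      eval (fun q => A q.1 q.2) f

theorem IsConjInvariant.isSymmetric_restrictDiagonal [Infinite K] {f : MvPolynomial (n × n) K}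
    (hf : IsConjInvariant f) : (restrictDiagonal n K f).IsSymmetric := fun σ =>
  MvPolynomial.funext fun y => by
    obtain ⟨g, hg⟩ := Matrix.exists_conj_diagonal_comp_perm σ y
    rw [eval_rename, eval_restrictDiagonal, eval_restrictDiagonal, hg, hf]

theorem IsConjInvariant.eval_eq_eval_restrictDiagonal {f : MvPolynomial (n × n) K}
    (hf : IsConjInvariant f) {A : Matrix n n K} {μ : n → K} (hμ : Function.Injective μ)
    (hA : A.charpoly = ∏ i, (Polynomial.X - Polynomial.C (μ i))) :
    eval (fun q => A q.1 q.2) f = eval μ (restrictDiagonal n K f) := by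
  obtain ⟨g, rfl⟩ := Matrix.exists_conj_diagonal_of_charpoly_eq_prod hμ hA
  rw [hf, eval_restrictDiagonal]

end Invariants

section CharpolyCoefficients

variable {n : ℕ}

theorem genericMatrix_eq_mvPolynomialX :
    genericMatrix n = Matrix.mvPolynomialX (Fin n) (Fin n) ℂ :=
  rfl

theorem Qpoly_isHomogeneous {j : ℕ} (hj : j ≤ n) : (Qpoly n j).IsHomogeneous j := by
  have H := Matrix.charpoly.univ_coeff_isHomogeneous ℂ (Fin n) (n - j) j
    (by simp only [Fintype.card_fin]; omega)
  rw [Qpoly, genericMatrix_eq_mvPolynomialX, ← map_one C, ← map_neg, ← map_pow]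
  exact H.C_mul _

theorem eval_Qpoly (A : Matrix (Fin n) (Fin n) ℂ) (j : ℕ) :
    eval (fun q => A q.1 q.2) (Qpoly n j) = (-1) ^ j * A.charpoly.coeff (n - j) := by
  have hA : (genericMatrix n).map (eval fun q => A q.1 q.2) = A := by
    ext; simp [genericMatrix]
  rw [Qpoly, map_mul, map_pow, map_neg, map_one, ← Polynomial.coeff_map, ← Matrix.charpoly_map, hA]

theorem isConjInvariant_Qpoly (j : ℕ) : IsConjInvariant (Qpoly n j) := fun g A => by
  rw [eval_Qpoly, eval_Qpoly, Matrix.coe_units_inv, Matrix.charpoly_units_conj]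

theorem eval_Qpoly_of_charpoly_eq_prod {A : Matrix (Fin n) (Fin n) ℂ} {μ : Fin n → ℂ}
    (hA : A.charpoly = ∏ i, (Polynomial.X - Polynomial.C (μ i))) {j : ℕ} (hj : j ≤ n) :
    eval (fun q => A q.1 q.2) (Qpoly n j) = eval μ (esymm (Fin n) ℂ j) := by
  set s := Finset.univ.val.map μ
  have hs : Multiset.card s = n := by simp [s]
  have hcoeff : A.charpoly.coeff (n - j) = (-1) ^ j * s.esymm j := by
    have hprod : A.charpoly = (s.map fun t => Polynomial.X - Polynomial.C t).prod := by
      rw [hA, Multiset.map_map]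
      rfl
    rw [hprod, Multiset.prod_X_sub_C_coeff s (by omega), hs, Nat.sub_sub_self hj]
  rw [eval_Qpoly, hcoeff, ← mul_assoc, ← mul_pow, neg_one_mul, neg_neg, one_pow, one_mul]
  exact (aeval_esymm_eq_multiset_esymm (Fin n) ℂ j μ).symm

theorem eval_aeval_Qpoly_of_charpoly_eq_prod {A : Matrix (Fin n) (Fin n) ℂ} {μ : Fin n → ℂ}
    (hA : A.charpoly = ∏ i, (Polynomial.X - Polynomial.C (μ i))) (Φ : MvPolynomial (Fin n) ℂ) :
    eval (fun q => A q.1 q.2) (aeval (fun i : Fin n => Qpoly n (i + 1)) Φ) =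
      eval μ (aeval (fun i : Fin n => esymm (Fin n) ℂ (i + 1)) Φ) := by
  simp only [eval_aeval, eval_Qpoly_of_charpoly_eq_prod hA (Nat.succ_le_of_lt (Fin.is_lt _))]

theorem aeval_Qpoly_mem_adjoin (Φ : MvPolynomial (Fin n) ℂ) :
    aeval (fun i : Fin n => Qpoly n (i + 1)) Φ ∈ Algebra.adjoin ℂ (Qpoly n '' Set.Icc 1 n) := by
  refine Algebra.adjoin_mono ?_ ((Algebra.adjoin_range_eq_range_aeval ℂ _).ge ⟨Φ, rfl⟩)
  rintro _ ⟨i, rfl⟩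
  exact ⟨i + 1, ⟨by omega, i.is_lt⟩, rfl⟩

theorem IsConjInvariant.mem_adjoin_Qpoly {f : MvPolynomial (Fin n × Fin n) ℂ}
    (hf : IsConjInvariant f) : f ∈ Algebra.adjoin ℂ (Qpoly n '' Set.Icc 1 n) := by
  obtain ⟨Φ, hΦ⟩ := exists_aeval_esymm_eq hf.isSymmetric_restrictDiagonal
  obtain ⟨Ψ, hΨ⟩ := exists_aeval_esymm_eq (pairwiseDiffProd_isSymmetric (σ := Fin n) (R := ℂ))
  suffices f = aeval (fun i : Fin n => Qpoly n (i + 1)) Φ by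
    rw [this]
    exact aeval_Qpoly_mem_adjoin Φ
  refine eq_of_eval_eq_of_eval_ne_zero (Δ := aeval (fun i : Fin n => Qpoly n (i + 1)) Ψ)
    ?_ fun x hx => ?_
  · intro hΔ
    have hν : Function.Injective fun i : Fin n => (i : ℂ) :=
      Nat.cast_injective.comp Fin.val_injective
    have := eval_aeval_Qpoly_of_charpoly_eq_prod
      (Matrix.charpoly_diagonal fun i : Fin n => (i : ℂ)) Ψ
    rw [hΔ, map_zero, hΨ] at this
    exact (eval_pairwiseDiffProd_ne_zero_iff _).2 hν this.symm
  · obtain ⟨μ, hμ⟩ := (Matrix.of (Function.curry x)).exists_charpoly_eq_prod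
    have hx_eq : (fun q => Matrix.of (Function.curry x) q.1 q.2) = x := rfl
    rw [← hx_eq] at hx ⊢
    rw [eval_aeval_Qpoly_of_charpoly_eq_prod hμ, hΨ] at hx
    rw [hf.eval_eq_eval_restrictDiagonal ((eval_pairwiseDiffProd_ne_zero_iff μ).1 hx) hμ,
      eval_aeval_Qpoly_of_charpoly_eq_prod hμ, hΦ]

end CharpolyCoefficients

/-- Each `Q_j` (for `1 ≤ j ≤ n`) is a `GL_n(ℂ)`-conjugation-invariant homogeneous
polynomial of degree `j` on `gl_n`, and `Q_1, …, Q_n` generate the algebra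
`ℂ[gl_n]^{GL_n}` of conjugation-invariant polynomial functions. -/
theorem char_coeffs_generate_invariants (n : ℕ) :
    (∀ j : ℕ, 1 ≤ j → j ≤ n → (Qpoly n j).IsHomogeneous j) ∧
    (∀ j : ℕ, 1 ≤ j → j ≤ n → ∀ (g : GL (Fin n) ℂ) (X : Matrix (Fin n) (Fin n) ℂ),
      MvPolynomial.eval
          (fun q => ((g : Matrix (Fin n) (Fin n) ℂ) * X *
              (↑g⁻¹ : Matrix (Fin n) (Fin n) ℂ)) q.1 q.2) (Qpoly n j) =
        MvPolynomial.eval (fun q => X q.1 q.2) (Qpoly n j)) ∧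
    (∀ f : MvPolynomial (Fin n × Fin n) ℂ,
      (∀ (g : GL (Fin n) ℂ) (X : Matrix (Fin n) (Fin n) ℂ),
        MvPolynomial.eval
            (fun q => ((g : Matrix (Fin n) (Fin n) ℂ) * X *
                (↑g⁻¹ : Matrix (Fin n) (Fin n) ℂ)) q.1 q.2) f =
          MvPolynomial.eval (fun q => X q.1 q.2) f) →
      f ∈ Algebra.adjoin ℂ (Qpoly n '' (Set.Icc 1 n))) :=
  ⟨fun _ _ hj => Qpoly_isHomogeneous hj, fun j _ _ => isConjInvariant_Qpoly j,
    fun _ hf => IsConjInvariant.mem_adjoin_Qpoly hf⟩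
end

section
/- Let A be a filtered ℂ-algebra with Gr A a finitely generated commutative domain, Z ⊆ Z(A) a central subalgebra, and J a two-sided ideal of A with J ∩ Z = I. If A/IA is a domain and GK(A/J) = GK(A/IA), then J = IA. -/
/-!
If `J ≠ IA`, pick `x ∈ J \ IA`. Since `A/IA` is a domain, left multiplication by `x` is injective
on `A/IA`, so modulo `IA` the space `F^(m+d)` (with `x ∈ F^d`) contains the copy `x F^m` of `F^m`,
which dies in `A/J`. Writing `f`, `g` for the Hilbert functions of `A/IA` and `A/J`, this gives
`f m + g (m + d) ≤ f (m + d)` and, iterating, `n g(n) ≤ f((d+1) n)`; hence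
`GK(A/IA) ≥ GK(A/J) + 1`. Commutativity of `Gr A` makes `dim F^m` polynomial in `m` (ordered
monomials in a basis of `F` span `F^m`), so `GK(A/J)` is finite and the two cannot be equal.
-/

open Filter

/-- The Gelfand–Kirillov dimension of the quotient of the `ℂ`-algebra `A` by a (two-sided)
ideal `J` (given as the underlying `ℂ`-subspace): the supremum over all finite-dimensional
subspaces `V ⊆ A` of `limsup_m log dim(image of V^m in A/J) / log m`. -/
noncomputable def gkDimQuot {A : Type*} [Ring A] [Algebra ℂ A] (J : Submodule ℂ A) :
    EReal :=
  ⨆ (V : Submodule ℂ A) (_ : FiniteDimensional ℂ V),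
    Filter.limsup
      (fun m : ℕ =>
        ((Real.log (Module.finrank ℂ ((V ^ m).map J.mkQ)) / Real.log m : ℝ) : EReal))
      Filter.atTop

open Module Submodule

section Filtration

variable {R A : Type*} [CommSemiring R] [Semiring A] [Algebra R A] {F : Submodule R A}

instance Submodule.finite_pow [Module.Finite R F] (n : ℕ) :
    Module.Finite R (F ^ n : Submodule R A) :=
  Module.Finite.iff_fg.2 ((Module.Finite.iff_fg.1 ‹_›).pow n)

theorem List.prod_mem_pow_length {l : List A} (hl : ∀ a ∈ l, a ∈ F) : l.prod ∈ F ^ l.length := by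
  induction l with
  | nil => exact one_le.1 (pow_zero F).ge
  | cons a l ih =>
    simpa [pow_succ'] using mul_mem_mul (hl a (by simp)) (ih fun b hb => hl b (by simp [hb]))

theorem Submodule.exists_le_pow_of_fg (hone : (1 : A) ∈ F) (hgen : ∀ a : A, ∃ i, a ∈ F ^ i)
    {V : Submodule R A} (hV : V.FG) : ∃ N, V ≤ F ^ N := by
  obtain ⟨s, rfl⟩ := hV
  choose idx hidx using hgen
  refine ⟨s.sup idx, span_le.2 fun a ha => ?_⟩
  exact pow_le_pow_right' (one_le.2 hone) (Finset.le_sup ha) (hidx a)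

end Filtration

section OrderedMonomials

theorem List.ncard_pairwise_le_length_le {ι : Type*} [LinearOrder ι] [Fintype ι] (m : ℕ) :
    {l : List ι | l.Pairwise (· ≤ ·) ∧ l.length ≤ m}.ncard ≤ (m + 1) ^ Fintype.card ι := by
  classical
  have hcount : ∀ l ∈ {l : List ι | l.Pairwise (· ≤ ·) ∧ l.length ≤ m},
      (fun i => l.count i) ∈ Fintype.piFinset fun _ : ι => Finset.range (m + 1) := by
    intro l hl
    simpa [Nat.lt_succ_iff] using fun i => List.count_le_length.trans hl.2
  have hinj : Set.InjOn (fun (l : List ι) (i : ι) => l.count i)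
      {l : List ι | l.Pairwise (· ≤ ·) ∧ l.length ≤ m} := fun l₁ h₁ l₂ h₂ h =>
    (List.perm_iff_count.2 (congrFun h)).eq_of_pairwise' h₁.1 h₂.1
  refine (Set.ncard_le_ncard_of_injOn _ hcount hinj (Finset.finite_toSet _)).trans_eq ?_
  rw [Set.ncard_coe_finset, Fintype.card_piFinset]
  simp

variable {A ι : Type*} [Monoid A] [LinearOrder ι]

def orderedMonomials (x : ι → A) (m : ℕ) : Set A :=
  (fun l : List ι => (l.map x).prod) '' {l | l.Pairwise (· ≤ ·) ∧ l.length ≤ m}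

theorem orderedMonomials_mono (x : ι → A) : Monotone (orderedMonomials x) :=
  fun _ _ h => Set.image_mono fun _ hl => ⟨hl.1, hl.2.trans h⟩

theorem orderedMonomials_finite [Finite ι] (x : ι → A) (m : ℕ) :
    (orderedMonomials x m).Finite :=
  ((List.finite_length_le ι m).subset fun _ hl => hl.2).image _

end OrderedMonomials

section Straightening

variable {R A ι : Type*} [CommSemiring R] [Ring A] [Algebra R A] [LinearOrder ι]
  {F : Submodule R A}

theorem List.Perm.prod_sub_prod_mem_pow (hF : ∀ a ∈ F, ∀ b ∈ F, a * b - b * a ∈ F)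
    {l l' : List A} (hp : l.Perm l') (hl : ∀ a ∈ l, a ∈ F) :
    l.prod - l'.prod ∈ F ^ (l.length - 1) := by
  induction hp with
  | nil => simp
  | @cons a t t' h ih =>
    rcases t with _ | ⟨b, t⟩
    · simp [h.symm.eq_nil]
    · have := mul_mem_mul (hl a (by simp)) (ih fun c hc => hl c (by simp_all))
      simpa [← pow_succ', mul_sub] using this
  | swap a b t =>
    have := mul_mem_mul (hF b (hl b (by simp)) a (hl a (by simp)))
      (List.prod_mem_pow_length (F := F) (l := t) fun c hc => hl c (by simp [hc]))
    simpa [← pow_succ', sub_mul, mul_assoc] using this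
  | trans h₁ h₂ ih₁ ih₂ =>
    have h₂' := ih₂ fun a ha => hl a (h₁.mem_iff.2 ha)
    rw [← h₁.length_eq] at h₂'
    simpa using add_mem (ih₁ hl) h₂'

theorem orderedMonomial_mul_mem_span (hone : (1 : A) ∈ F)
    (hF : ∀ a ∈ F, ∀ b ∈ F, a * b - b * a ∈ F) {x : ι → A} (hxF : ∀ i, x i ∈ F) {m : ℕ}
    (hm : F ^ m ≤ span R (orderedMonomials x m)) {l : List ι} (hl : l.Pairwise (· ≤ ·))
    (hlm : l.length ≤ m) (j : ι) :
    (l.map x).prod * x j ∈ span R (orderedMonomials x (m + 1)) := by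
  set l' := l.orderedInsert (· ≤ ·) j
  have hsorted : (l'.map x).prod ∈ span R (orderedMonomials x (m + 1)) :=
    subset_span ⟨l', ⟨hl.orderedInsert j l, by rw [List.orderedInsert_length]; omega⟩, rfl⟩
  have hperm : ((l ++ [j]).map x).Perm (l'.map x) :=
    ((List.perm_append_singleton j l).trans (List.perm_orderedInsert _ j l).symm).map x
  have herror := hperm.prod_sub_prod_mem_pow hF fun a ha => by
    obtain ⟨i, -, rfl⟩ := List.mem_map.1 ha
    exact hxF i
  simp only [List.length_map, List.length_append, List.length_singleton,
    Nat.add_sub_cancel] at herror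
  have herror' := span_mono (orderedMonomials_mono x m.le_succ)
    (hm (pow_le_pow_right' (one_le.2 hone) hlm herror))
  simpa using add_mem hsorted herror'

theorem pow_le_span_orderedMonomials (hone : (1 : A) ∈ F)
    (hF : ∀ a ∈ F, ∀ b ∈ F, a * b - b * a ∈ F) {x : ι → A} (hx : span R (Set.range x) = F)
    (m : ℕ) : F ^ m ≤ span R (orderedMonomials x m) := by
  have hxF : ∀ i, x i ∈ F := fun i => hx ▸ subset_span ⟨i, rfl⟩
  induction m with
  | zero => exact one_le.2 (subset_span ⟨[], ⟨List.Pairwise.nil, le_rfl⟩, rfl⟩)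
  | succ m ih =>
    refine (pow_succ F m ▸ mul_le_mul' ih hx.ge).trans ?_
    rw [span_mul_span, span_le]
    rintro _ ⟨_, ⟨l, ⟨hl, hlm⟩, rfl⟩, _, ⟨j, rfl⟩, rfl⟩
    exact orderedMonomial_mul_mem_span hone hF hxF ih hl hlm j

end Straightening

theorem finrank_span_le_ncard {K M : Type*} [DivisionRing K] [AddCommGroup M] [Module K M]
    {s : Set M} (hs : s.Finite) : finrank K (span K s) ≤ s.ncard := by
  have := finrank_span_finset_le_card (R := K) hs.toFinset
  rwa [hs.coe_toFinset, ← Set.ncard_eq_toFinset_card s hs] at this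

theorem Submodule.finrank_pow_le {K A : Type*} [Field K] [Ring A] [Algebra K A]
    {F : Submodule K A} [FiniteDimensional K F] (hone : (1 : A) ∈ F)
    (hF : ∀ a ∈ F, ∀ b ∈ F, a * b - b * a ∈ F) (m : ℕ) :
    finrank K (F ^ m : Submodule K A) ≤ (m + 1) ^ finrank K F := by
  let x : Fin (finrank K F) → A := fun i => finBasis K F i
  have hx : span K (Set.range x) = F := by
    rw [show Set.range x = F.subtype '' Set.range (finBasis K F) by ext; simp [x],
      ← map_span, (finBasis K F).span_eq, map_subtype_top]
  have := FiniteDimensional.span_of_finite K (orderedMonomials_finite x m)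
  calc finrank K (F ^ m : Submodule K A)
      ≤ finrank K (span K (orderedMonomials x m)) :=
        Submodule.finrank_mono (pow_le_span_orderedMonomials hone hF hx m)
    _ ≤ (orderedMonomials x m).ncard := finrank_span_le_ncard (orderedMonomials_finite x m)
    _ ≤ {l : List (Fin (finrank K F)) | l.Pairwise (· ≤ ·) ∧ l.length ≤ m}.ncard :=
        Set.ncard_image_le ((List.finite_length_le _ m).subset fun _ hl => hl.2)
    _ ≤ (m + 1) ^ finrank K F := by
        simpa using List.ncard_pairwise_le_length_le (ι := Fin (finrank K F)) m

section GrowthDegree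

open Topology

noncomputable def growthDegree (u : ℕ → ℕ) : EReal :=
  limsup (fun n : ℕ => ((Real.log (u n) / Real.log n : ℝ) : EReal)) atTop

theorem growthDegree_nonneg (u : ℕ → ℕ) : 0 ≤ growthDegree u :=
  le_limsup_of_frequently_le' <| Frequently.of_forall fun n => by
    exact_mod_cast div_nonneg (Real.log_natCast_nonneg _) (Real.log_natCast_nonneg _)

theorem eventually_le_rpow_of_growthDegree_lt {u : ℕ → ℕ} {c : ℝ} (h : growthDegree u < c) :
    ∀ᶠ n : ℕ in atTop, (u n : ℝ) ≤ (n : ℝ) ^ c := by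
  filter_upwards [eventually_lt_of_limsup_lt h, eventually_ge_atTop 2] with n hn hn2
  have hlog : 0 < Real.log n := Real.log_pos (by exact_mod_cast hn2)
  rcases (u n).eq_zero_or_pos with h0 | h0
  · rw [h0, Nat.cast_zero]
    positivity
  · rw [Real.le_rpow_iff_log_le (by exact_mod_cast h0) (by positivity)]
    exact ((div_lt_iff₀ hlog).1 (by exact_mod_cast hn)).le

theorem growthDegree_le_of_eventually_le {u : ℕ → ℕ} {C c : ℝ} (hC : 1 ≤ C) (hc : 0 ≤ c)
    (h : ∀ᶠ n : ℕ in atTop, (u n : ℝ) ≤ C * (n : ℝ) ^ c) : growthDegree u ≤ c := by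
  have hlim : Tendsto (fun n : ℕ => ((c + Real.log C / Real.log n : ℝ) : EReal)) atTop (𝓝 c) := by
    have : Tendsto (fun n : ℕ => Real.log C / Real.log n) atTop (𝓝 0) :=
      tendsto_const_nhds.div_atTop (Real.tendsto_log_atTop.comp tendsto_natCast_atTop_atTop)
    have := (continuous_coe_real_ereal.tendsto _).comp (this.const_add c)
    rwa [add_zero] at this
  rw [growthDegree, ← hlim.limsup_eq]
  refine limsup_le_limsup ?_
  filter_upwards [h, eventually_ge_atTop 2] with n hn hn2
  have hlog : 0 < Real.log n := Real.log_pos (by exact_mod_cast hn2)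
  have hlogC : 0 ≤ Real.log C := Real.log_nonneg hC
  have hbound : Real.log (u n) ≤ Real.log C + c * Real.log n := by
    rcases (u n).eq_zero_or_pos with h0 | h0
    · rw [h0, Nat.cast_zero, Real.log_zero]
      positivity
    · calc Real.log (u n) ≤ Real.log (C * n ^ c) := Real.log_le_log (by exact_mod_cast h0) hn
        _ = Real.log C + c * Real.log n := by
          rw [Real.log_mul (by positivity) (by positivity), Real.log_rpow (by positivity)]
  have : Real.log (u n) / Real.log n ≤ c + Real.log C / Real.log n := by
    rw [div_le_iff₀ hlog, add_mul, div_mul_cancel₀ _ hlog.ne']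
    linarith
  exact_mod_cast this

theorem growthDegree_le_of_le_pow {u : ℕ → ℕ} {b : ℕ} (h : ∀ n, u n ≤ (n + 1) ^ b) :
    growthDegree u ≤ (b : ℝ) := by
  refine growthDegree_le_of_eventually_le (C := 2 ^ b) (one_le_pow₀ one_le_two) b.cast_nonneg ?_
  filter_upwards [eventually_ge_atTop 1] with n hn
  have hn : (1 : ℝ) ≤ n := by exact_mod_cast hn
  rw [Real.rpow_natCast, ← mul_pow]
  calc (u n : ℝ) ≤ ((n : ℝ) + 1) ^ b := by exact_mod_cast h n
    _ ≤ (2 * n) ^ b := pow_le_pow_left₀ (by positivity) (by linarith) b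

theorem growthDegree_le_of_le_comp_mul {u v : ℕ → ℕ} {N : ℕ} (hN : 0 < N)
    (h : ∀ n, v n ≤ u (N * n)) : growthDegree v ≤ growthDegree u := by
  refine EReal.le_of_forall_lt_iff_le.1 fun c hc => ?_
  have hc0 : 0 ≤ c := by exact_mod_cast (growthDegree_nonneg u).trans hc.le
  have hN' : Tendsto (N * ·) atTop atTop := tendsto_id.const_mul_atTop' hN
  have hC : (1 : ℝ) ≤ (N : ℝ) ^ c := Real.one_le_rpow (by exact_mod_cast hN) hc0
  refine growthDegree_le_of_eventually_le hC hc0 ?_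
  filter_upwards [hN'.eventually (eventually_le_rpow_of_growthDegree_lt hc)] with n hn
  calc (v n : ℝ) ≤ u (N * n) := by exact_mod_cast h n
    _ ≤ ((N * n : ℕ) : ℝ) ^ c := hn
    _ = (N : ℝ) ^ c * (n : ℝ) ^ c := by
      push_cast
      exact Real.mul_rpow (by positivity) (by positivity)

theorem one_add_growthDegree_le {u : ℕ → ℕ} (hu : ∀ n, 1 ≤ u n) :
    1 + growthDegree u ≤ growthDegree fun n => n * u n := by
  have hsplit : ∀ᶠ n : ℕ in atTop, ((Real.log ((n * u n : ℕ) : ℝ) / Real.log n : ℝ) : EReal) =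
      ((Real.log (u n) / Real.log n : ℝ) : EReal) + 1 := by
    filter_upwards [eventually_ge_atTop 2] with n hn
    have hlog : 0 < Real.log n := Real.log_pos (by exact_mod_cast hn)
    have hu0 : (0 : ℝ) < u n := by exact_mod_cast hu n
    rw [Nat.cast_mul, Real.log_mul (by positivity) hu0.ne', add_div, div_self hlog.ne']
    norm_cast
    ring_nf
  rw [growthDegree, growthDegree, limsup_congr hsplit, add_comm]
  simpa [Pi.add_def] using EReal.le_limsup_add (f := atTop)
    (u := fun n : ℕ => ((Real.log (u n) / Real.log n : ℝ) : EReal)) (v := fun _ => 1)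

theorem growthDegree_lt_of_mul_le_comp_mul {u v : ℕ → ℕ} (hu : ∀ n, 1 ≤ u n)
    (hfin : growthDegree u ≠ ⊤) {N : ℕ} (hN : 0 < N) (h : ∀ n, n * u n ≤ v (N * n)) :
    growthDegree u < growthDegree v := by
  have hbot : growthDegree u ≠ ⊥ := (EReal.bot_lt_zero.trans_le (growthDegree_nonneg u)).ne'
  calc growthDegree u < 1 + growthDegree u := by
        rw [← EReal.coe_toReal hfin hbot]
        exact_mod_cast lt_one_add _
    _ ≤ growthDegree fun n => n * u n := one_add_growthDegree_le hu
    _ ≤ growthDegree v := growthDegree_le_of_le_comp_mul hN h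

end GrowthDegree

theorem finrank_map_mkQ_add_finrank_map_mkQ_le {K M : Type*} [DivisionRing K] [AddCommGroup M]
    [Module K M] {I J U V : Submodule K M} [FiniteDimensional K V]
    (hIJ : I ≤ J) (hUJ : U ≤ J) (hUV : U ≤ V) :
    finrank K (U.map I.mkQ) + finrank K (V.map J.mkQ) ≤ finrank K (V.map I.mkQ) := by
  set q := factor hIJ
  set V' := V.map I.mkQ
  have hV : V.map J.mkQ = V'.map q := by rw [← map_comp, factor_comp_mk]
  have hU : U.map I.mkQ ≤ V' := Submodule.map_mono hUV
  have hUq : U.map I.mkQ ≤ LinearMap.ker q := by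
    rintro _ ⟨u, hu, rfl⟩
    simpa [q] using hUJ hu
  have hker : finrank K (U.map I.mkQ) ≤ finrank K (LinearMap.ker (q.domRestrict V')) := by
    rw [LinearMap.ker_domRestrict, ← (comapSubtypeEquivOfLe hU).finrank_eq]
    exact Submodule.finrank_mono (comap_mono hUq)
  have := LinearMap.finrank_range_add_finrank_ker (q.domRestrict V')
  rw [LinearMap.range_domRestrict, ← hV] at this
  omega

theorem add_mul_le_of_forall_add_le {f g : ℕ → ℕ} {d : ℕ} (hg : Monotone g)
    (h : ∀ m, f m + g (m + d) ≤ f (m + d)) (n k : ℕ) : f n + k * g n ≤ f (n + k * d) := by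
  induction k with
  | zero => simp
  | succ k ih =>
    have := h (n + k * d)
    have := hg (show n ≤ n + k * d + d by omega)
    rw [show n + (k + 1) * d = n + k * d + d by ring, Nat.succ_mul]
    omega

section HilbertFunction

variable {K A : Type*} [Field K] [Ring A] [Algebra K A]

noncomputable def hilbertFn (F W : Submodule K A) (n : ℕ) : ℕ :=
  finrank K ((F ^ n).map W.mkQ)

variable {F : Submodule K A} [FiniteDimensional K F]

theorem hilbertFn_mono (hone : (1 : A) ∈ F) (W : Submodule K A) : Monotone (hilbertFn F W) :=
  fun _ _ h => Submodule.finrank_mono (Submodule.map_mono (pow_le_pow_right' (one_le.2 hone) h))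

theorem one_le_hilbertFn (hone : (1 : A) ∈ F) {W : Submodule K A} (h1 : (1 : A) ∉ W) (n : ℕ) :
    1 ≤ hilbertFn F W n := by
  rw [Nat.one_le_iff_ne_zero, hilbertFn, Ne, Submodule.finrank_eq_zero, ← Ne,
    Submodule.ne_bot_iff]
  exact ⟨W.mkQ 1, mem_map_of_mem (one_le.1 (one_le_pow_of_one_le' (one_le.2 hone) n)),
    by simpa using h1⟩

theorem growthDegree_hilbertFn_le (hone : (1 : A) ∈ F)
    (hF : ∀ a ∈ F, ∀ b ∈ F, a * b - b * a ∈ F) (W : Submodule K A) :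
    growthDegree (hilbertFn F W) ≤ (finrank K F : ℝ) :=
  growthDegree_le_of_le_pow fun n =>
    (Submodule.finrank_map_le _ _).trans (finrank_pow_le hone hF n)

theorem finrank_map_mkQ_map_mulLeft {I : Ideal A} {x : A} (hx : ∀ v, x * v ∈ I → v ∈ I)
    (U : Submodule K A) :
    finrank K ((U.map (LinearMap.mulLeft K x)).map (I.restrictScalars K).mkQ) =
      finrank K (U.map (I.restrictScalars K).mkQ) := by
  set I' := I.restrictScalars K
  have hI : I' ≤ I'.comap (LinearMap.mulLeft K x) := fun v hv => I.mul_mem_left x hv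
  have hinj : Function.Injective (I'.mapQ I' _ hI) := by
    rw [← LinearMap.ker_eq_bot, ker_mapQ, eq_bot_iff]
    exact (Submodule.map_mono (show I'.comap (LinearMap.mulLeft K x) ≤ I' from fun v => hx v)).trans
      (mkQ_map_self I').le
  rw [← map_comp, ← mapQ_mkQ, map_comp]
  exact (equivMapOfInjective _ hinj _).finrank_eq.symm

theorem hilbertFn_add_hilbertFn_le {I : Ideal A} {J : Submodule K A}
    (hIJ : I.restrictScalars K ≤ J) {x : A} {d : ℕ} (hxF : x ∈ F ^ d) (hxJ : ∀ v, x * v ∈ J)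
    (hreg : ∀ v, x * v ∈ I → v ∈ I) (m : ℕ) :
    hilbertFn F (I.restrictScalars K) m + hilbertFn F J (m + d) ≤
      hilbertFn F (I.restrictScalars K) (m + d) := by
  rw [hilbertFn, hilbertFn, hilbertFn, ← finrank_map_mkQ_map_mulLeft hreg]
  refine finrank_map_mkQ_add_finrank_map_mkQ_le hIJ ?_ ?_
  · rintro _ ⟨v, -, rfl⟩
    exact hxJ v
  · rintro _ ⟨v, hv, rfl⟩
    rw [add_comm, pow_add]
    exact mul_mem_mul hxF hv

theorem mul_hilbertFn_le_hilbertFn (hone : (1 : A) ∈ F) {I : Ideal A} {J : Submodule K A}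
    (hIJ : I.restrictScalars K ≤ J) {x : A} {d : ℕ} (hxF : x ∈ F ^ d) (hxJ : ∀ v, x * v ∈ J)
    (hreg : ∀ v, x * v ∈ I → v ∈ I) (n : ℕ) :
    n * hilbertFn F J n ≤ hilbertFn F (I.restrictScalars K) ((d + 1) * n) := by
  have := add_mul_le_of_forall_add_le (hilbertFn_mono hone J)
    (hilbertFn_add_hilbertFn_le hIJ hxF hxJ hreg) n n
  rw [show (d + 1) * n = n + n * d by ring]
  omega

end HilbertFunction

theorem gkDimQuot_eq_growthDegree_hilbertFn {A : Type*} [Ring A] [Algebra ℂ A]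
    {F : Submodule ℂ A} [FiniteDimensional ℂ F] (hone : (1 : A) ∈ F)
    (hgen : ∀ a : A, ∃ i, a ∈ F ^ i) (W : Submodule ℂ A) :
    gkDimQuot W = growthDegree (hilbertFn F W) := by
  refine le_antisymm (iSup₂_le fun V hV => ?_) (le_iSup₂_of_le F ‹_› le_rfl)
  obtain ⟨N, hN⟩ := exists_le_pow_of_fg hone hgen (Module.Finite.iff_fg.1 hV)
  have hVm : ∀ m, V ^ m ≤ F ^ ((N + 1) * m) := fun m => by
    rw [pow_mul]
    exact pow_le_pow_left' (hN.trans (pow_le_pow_right' (one_le.2 hone) N.le_succ)) m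
  exact growthDegree_le_of_le_comp_mul (v := fun m => finrank ℂ ((V ^ m).map W.mkQ))
    N.succ_pos fun m => Submodule.finrank_mono (Submodule.map_mono (hVm m))

theorem ideal_eq_of_gk_eq_general {A : Type*} [Ring A] [Algebra ℂ A]
    (F₁ : Submodule ℂ A) [FiniteDimensional ℂ F₁] (hone : (1 : A) ∈ F₁)
    (hgen : ∀ a : A, ∃ i : ℕ, a ∈ F₁ ^ i)
    -- `Gr A` is commutative
    (hcomm : ∀ (i j : ℕ), ∀ a ∈ F₁ ^ i, ∀ b ∈ F₁ ^ j,
      a * b - b * a ∈ F₁ ^ (i + j - 1))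
    -- `Z` is a central subalgebra
    (Z : Subalgebra ℂ A)
    -- `J` is a two-sided ideal; `I := J ∩ Z`, generating the ideal `IA`
    (J : TwoSidedIdeal A)
    -- `A / IA` is a domain
    (hquotdom : (∀ a b : A, a * b ∈ Ideal.span ((J : Set A) ∩ (Z : Set A)) →
        a ∈ Ideal.span ((J : Set A) ∩ (Z : Set A)) ∨
        b ∈ Ideal.span ((J : Set A) ∩ (Z : Set A))) ∧
      (1 : A) ∉ Ideal.span ((J : Set A) ∩ (Z : Set A)))
    -- `GK(A/J) = GK(A/IA)`
    (hGK : gkDimQuot ((TwoSidedIdeal.asIdeal J).restrictScalars ℂ) =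
      gkDimQuot ((Ideal.span ((J : Set A) ∩ (Z : Set A))).restrictScalars ℂ)) :
    (J : Set A) = ↑(Ideal.span ((J : Set A) ∩ (Z : Set A))) := by
  set I := Ideal.span ((J : Set A) ∩ (Z : Set A))
  set J' := J.asIdeal.restrictScalars ℂ
  have hIJ : I ≤ J.asIdeal := Ideal.span_le.2 fun a ha => TwoSidedIdeal.mem_asIdeal.2 ha.1
  refine Set.Subset.antisymm (fun x hxJ => ?_) fun a ha => TwoSidedIdeal.mem_asIdeal.1 (hIJ ha)
  by_contra hxI
  obtain ⟨d, hxd⟩ := hgen x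
  have hgrowth : ∀ n, n * hilbertFn F₁ J' n ≤ hilbertFn F₁ (I.restrictScalars ℂ) ((d + 1) * n) :=
    mul_hilbertFn_le_hilbertFn hone hIJ hxd
      (fun v => TwoSidedIdeal.mem_asIdeal.2 (J.mul_mem_right x v hxJ))
      fun v hv => (hquotdom.1 x v hv).resolve_left hxI
  have h1J : (1 : A) ∉ J' := fun h =>
    hquotdom.2 (Ideal.subset_span ⟨TwoSidedIdeal.mem_asIdeal.1 h, Z.one_mem⟩)
  have hF : ∀ a ∈ F₁, ∀ b ∈ F₁, a * b - b * a ∈ F₁ := by simpa using hcomm 1 1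
  have hfin : growthDegree (hilbertFn F₁ J') ≠ ⊤ :=
    ((growthDegree_hilbertFn_le hone hF J').trans_lt (EReal.coe_lt_top _)).ne
  have hlt := growthDegree_lt_of_mul_le_comp_mul (one_le_hilbertFn hone h1J) hfin d.succ_pos
    hgrowth
  rw [← gkDimQuot_eq_growthDegree_hilbertFn hone hgen,
    ← gkDimQuot_eq_growthDegree_hilbertFn hone hgen, hGK] at hlt
  exact lt_irrefl _ hlt

/-- Let `A` be a filtered `ℂ`-algebra (filtered by powers of a finite-dimensional
generating subspace `F₁ ∋ 1`) whose associated graded algebra is a finitely generated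
commutative domain, `Z ⊆ Z(A)` a central subalgebra, and `J` a two-sided ideal of `A`
with `J ∩ Z = I`.  If `A/IA` is a domain and `GK(A/J) = GK(A/IA)`, then `J = IA`. -/
theorem ideal_eq_of_gk_eq {A : Type*} [Ring A] [Algebra ℂ A]
    (F₁ : Submodule ℂ A) [FiniteDimensional ℂ F₁] (hone : (1 : A) ∈ F₁)
    (hgen : ∀ a : A, ∃ i : ℕ, a ∈ F₁ ^ i)
    -- `Gr A` is commutative
    (hcomm : ∀ (i j : ℕ), ∀ a ∈ F₁ ^ i, ∀ b ∈ F₁ ^ j,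
      a * b - b * a ∈ F₁ ^ (i + j - 1))
    -- `Gr A` is a domain: products of elements with nonzero symbol have nonzero symbol
    (hdom : ∀ (i j : ℕ), ∀ a ∈ F₁ ^ i, ∀ b ∈ F₁ ^ j,
      a ∉ (if i = 0 then (⊥ : Submodule ℂ A) else F₁ ^ (i - 1)) →
      b ∉ (if j = 0 then (⊥ : Submodule ℂ A) else F₁ ^ (j - 1)) →
      a * b ∉ (if i + j = 0 then (⊥ : Submodule ℂ A) else F₁ ^ (i + j - 1)))
    -- `Z` is a central subalgebra
    (Z : Subalgebra ℂ A) (hZ : ∀ z ∈ Z, ∀ a : A, z * a = a * z)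
    -- `J` is a two-sided ideal; `I := J ∩ Z`, generating the ideal `IA`
    (J : TwoSidedIdeal A)
    -- `A / IA` is a domain
    (hquotdom : (∀ a b : A, a * b ∈ Ideal.span ((J : Set A) ∩ (Z : Set A)) →
        a ∈ Ideal.span ((J : Set A) ∩ (Z : Set A)) ∨
        b ∈ Ideal.span ((J : Set A) ∩ (Z : Set A))) ∧
      (1 : A) ∉ Ideal.span ((J : Set A) ∩ (Z : Set A)))
    -- `GK(A/J) = GK(A/IA)`
    (hGK : gkDimQuot ((TwoSidedIdeal.asIdeal J).restrictScalars ℂ) =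
      gkDimQuot ((Ideal.span ((J : Set A) ∩ (Z : Set A))).restrictScalars ℂ)) :
    (J : Set A) = ↑(Ideal.span ((J : Set A) ∩ (Z : Set A))) :=
  ideal_eq_of_gk_eq_general F₁ hone hgen hcomm Z J hquotdom hGK
end
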